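/- Let m ≥ 0, let Γ' ⊆ V_m, and let x, y ∈ Γ' be distinct. Then c^{Γ'}_{x,y} = 0 if and only if every path x = z_0 ∼_m z_1 ∼_m ⋯ ∼_m z_k = y in the graph Γ_m contains an interior vertex z_i with 0 < i < k and z_i ∈ Γ'. -/

import Mathlib

open scoped BigOperators

noncomputable section

namespace SGPaper

/-- The three corners of the Sierpinski gasket:
`q₀ = (1/2, √3/2)`, `q₁ = (0,0)`, `q₂ = (1,0)`. -/
def q : Fin 3 → ℝ × ℝ
  | 0 => (1 / 2, Real.sqrt 3 / 2)
  | 1 => (0, 0)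
  | 2 => (1, 0)

/-- The contraction map towards corner `i`: `F_i(x) = (x + q_i)/2`. -/
def Fmap (i : Fin 3) (x : ℝ × ℝ) : ℝ × ℝ := (2⁻¹ : ℝ) • (x + q i)

/-- `Fword w = F_{w₁} ∘ ⋯ ∘ F_{w_m}` for the word `w = w₁⋯w_m`. -/
def Fword (w : List (Fin 3)) : ℝ × ℝ → ℝ × ℝ :=
  w.foldr (fun i f => Fmap i ∘ f) id

/-- The level-`m` vertex set of the Sierpinski gasket:
`V_m = ⋃_{|w| = m} F_w({q₀, q₁, q₂})`. -/
def V (m : ℕ) : Set (ℝ × ℝ) :=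
  {x | ∃ w : List (Fin 3), w.length = m ∧ ∃ i : Fin 3, x = Fword w (q i)}

/-- `x` and `y` are `m`-neighbors: they are distinct and belong to a common
level-`m` cell `F_w({q₀, q₁, q₂})`. -/
def Nbr (m : ℕ) (x y : ℝ × ℝ) : Prop :=
  x ≠ y ∧ ∃ w : List (Fin 3), w.length = m ∧
    (∃ i : Fin 3, x = Fword w (q i)) ∧ (∃ j : Fin 3, y = Fword w (q j))

/-- The value `(u x - u y)²` on the unordered pair `{x, y}`. -/
def edgeVal (u : ℝ × ℝ → ℝ) : Sym2 (ℝ × ℝ) → ℝ :=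
  Sym2.lift ⟨fun x y => (u x - u y) ^ 2, fun _ _ => by ring⟩

/-- The unordered pair `e` is an edge of the level-`m` graph `Γ_m`. -/
def IsEdge (m : ℕ) (e : Sym2 (ℝ × ℝ)) : Prop :=
  ∃ x y : ℝ × ℝ, Nbr m x y ∧ e = s(x, y)

/-- The level-`m` graph energy: `E_m(u) = (5/3)^m Σ (u x − u y)²`, the sum being over
unordered `m`-neighbor pairs `{x, y}` (a finite set, so `tsum` is the honest sum). -/
def Energy (m : ℕ) (u : ℝ × ℝ → ℝ) : ℝ :=
  (5 / 3 : ℝ) ^ m * ∑' e : {e : Sym2 (ℝ × ℝ) // IsEdge m e}, edgeVal u e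

/-- `Q_E(v)`: minimal level-`m` energy among functions `u : V_m → ℝ` agreeing
with `v` on `E` (the minimum is attained, so it equals this infimum). -/
def Q (m : ℕ) (E : Set (ℝ × ℝ)) (v : ℝ × ℝ → ℝ) : ℝ :=
  sInf {r | ∃ u : ℝ × ℝ → ℝ, (∀ x ∈ E, u x = v x) ∧ r = Energy m u}

/-- Indicator function of the point `z`. -/
def ind (z : ℝ × ℝ) : ℝ × ℝ → ℝ := fun t => if t = z then 1 else 0

/-- The conductance `c^E_{x,y} = (Q_E(𝟙_x) + Q_E(𝟙_y) − Q_E(𝟙_x + 𝟙_y))/2`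
between `x, y ∈ E`, computed at level `m`. -/
def cond (m : ℕ) (E : Set (ℝ × ℝ)) (x y : ℝ × ℝ) : ℝ :=
  (Q m E (ind x) + Q m E (ind y) - Q m E (ind x + ind y)) / 2


/-!
By the parallelogram law for `Q`, `c_{x,y} = (Q(𝟙_x - 𝟙_y) - Q(𝟙_x + 𝟙_y)) / 4`, and
`Q(𝟙_x + 𝟙_y) ≤ Q(𝟙_x - 𝟙_y)` because `|u|` never has more energy than `u`. If `Γ'` separates `x`
from `y`, flipping the sign of a competitor for `𝟙_x + 𝟙_y` on the vertices reachable from `y`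
outside `Γ'` gives the reverse inequality: the data vanish on the outer boundary of that set.
Otherwise let `w` be a minimizer for `𝟙_x - 𝟙_y`. Equality of the two `Q`s would make `|w|` a
minimizer for `𝟙_x + 𝟙_y` and forbid `w` to change sign across an edge, so along a path from `x`
to `y` avoiding `Γ'` the first vertex where `w` stops being positive is an interior zero of `w`
next to a vertex where `w > 0`, against the minimum principle for `|w|`.
-/

open scoped Classical
open Relation

lemma Nbr.symm {m : ℕ} {a b : ℝ × ℝ} (h : Nbr m a b) : Nbr m b a :=
  let ⟨hne, w, hw, ha, hb⟩ := h
  ⟨hne.symm, w, hw, hb, ha⟩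

lemma Nbr.left_mem {m : ℕ} {a b : ℝ × ℝ} (h : Nbr m a b) : a ∈ V m :=
  let ⟨_, w, hw, ⟨i, hi⟩, _⟩ := h
  ⟨w, hw, i, hi⟩

lemma Nbr.right_mem {m : ℕ} {a b : ℝ × ℝ} (h : Nbr m a b) : b ∈ V m :=
  h.symm.left_mem

lemma finite_V (m : ℕ) : (V m).Finite := by
  refine (Set.finite_range fun p : List.Vector (Fin 3) m × Fin 3 => Fword p.1.1 (q p.2)).subset ?_
  rintro x ⟨w, hw, i, rfl⟩
  exact ⟨(⟨w, hw⟩, i), rfl⟩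

lemma finite_isEdge (m : ℕ) : {e : Sym2 (ℝ × ℝ) | IsEdge m e}.Finite := by
  refine ((finite_V m).image2 (fun a b => s(a, b)) (finite_V m)).subset ?_
  rintro e ⟨a, b, hab, rfl⟩
  exact ⟨a, hab.left_mem, b, hab.right_mem, rfl⟩

instance (m : ℕ) : Fintype {e : Sym2 (ℝ × ℝ) // IsEdge m e} :=
  (finite_isEdge m).fintype

section Energy

variable {m : ℕ}

def edgeProd (u v : ℝ × ℝ → ℝ) : Sym2 (ℝ × ℝ) → ℝ :=
  Sym2.lift ⟨fun a b => (u a - u b) * (v a - v b), fun _ _ => by ring⟩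

def energyPolar (m : ℕ) (u v : ℝ × ℝ → ℝ) : ℝ :=
  (5 / 3 : ℝ) ^ m * ∑ e : {e : Sym2 (ℝ × ℝ) // IsEdge m e}, edgeProd u v e

lemma energy_eq_sum (u : ℝ × ℝ → ℝ) :
    Energy m u = (5 / 3 : ℝ) ^ m * ∑ e : {e : Sym2 (ℝ × ℝ) // IsEdge m e}, edgeVal u e := by
  rw [Energy, tsum_fintype]

lemma energy_le_energy {f g : ℝ × ℝ → ℝ}
    (h : ∀ a b, Nbr m a b → (f a - f b) ^ 2 ≤ (g a - g b) ^ 2) : Energy m f ≤ Energy m g := by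
  rw [energy_eq_sum, energy_eq_sum]
  gcongr with e
  obtain ⟨_, a, b, hab, rfl⟩ := e
  exact h a b hab

lemma energy_congr {f g : ℝ × ℝ → ℝ}
    (h : ∀ a b, Nbr m a b → (f a - f b) ^ 2 = (g a - g b) ^ 2) : Energy m f = Energy m g :=
  (energy_le_energy fun a b hab => (h a b hab).le).antisymm
    (energy_le_energy fun a b hab => (h a b hab).ge)

lemma energy_nonneg (u : ℝ × ℝ → ℝ) : 0 ≤ Energy m u := by
  rw [energy_eq_sum]
  refine mul_nonneg (by positivity) (Finset.sum_nonneg fun e _ => ?_)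
  induction (e : Sym2 (ℝ × ℝ)) using Sym2.ind
  exact sq_nonneg _

lemma continuous_energy : Continuous (Energy m) := by
  simp_rw [funext (energy_eq_sum (m := m))]
  refine continuous_const.mul (continuous_finsetSum _ fun e _ => ?_)
  induction (e : Sym2 (ℝ × ℝ)) using Sym2.ind with
  | h a b => exact ((continuous_apply a).sub (continuous_apply b)).pow 2

lemma energy_add_smul (u v : ℝ × ℝ → ℝ) (t : ℝ) :
    Energy m (u + t • v) = Energy m u + 2 * t * energyPolar m u v + t ^ 2 * Energy m v := by
  have hedge : ∀ e : Sym2 (ℝ × ℝ),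
      edgeVal (u + t • v) e = edgeVal u e + 2 * t * edgeProd u v e + t ^ 2 * edgeVal v e := by
    intro e
    induction e using Sym2.ind
    simp only [edgeVal, edgeProd, Sym2.lift_mk, Pi.add_apply, Pi.smul_apply, smul_eq_mul]
    ring
  simp only [energy_eq_sum, energyPolar, hedge, Finset.sum_add_distrib, ← Finset.mul_sum]
  ring

lemma energy_add_add_energy_sub (u v : ℝ × ℝ → ℝ) :
    Energy m (u + v) + Energy m (u - v) = 2 * Energy m u + 2 * Energy m v := by
  have hadd := energy_add_smul (m := m) u v 1
  have hsub := energy_add_smul (m := m) u v (-1)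
  rw [one_smul] at hadd
  rw [neg_smul, one_smul, ← sub_eq_add_neg] at hsub
  rw [hadd, hsub]
  ring

lemma edgeVal_abs_le (u : ℝ × ℝ → ℝ) (e : Sym2 (ℝ × ℝ)) : edgeVal |u| e ≤ edgeVal u e := by
  induction e using Sym2.ind with
  | h a b => exact sq_le_sq.mpr (by simpa using abs_abs_sub_abs_le_abs_sub (u a) (u b))

lemma energy_abs_le (u : ℝ × ℝ → ℝ) : Energy m |u| ≤ Energy m u := by
  rw [energy_eq_sum, energy_eq_sum]
  gcongr with e
  exact edgeVal_abs_le u e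

end Energy

section Q

variable {m : ℕ} {E : Set (ℝ × ℝ)}

lemma Q_le_energy {u v : ℝ × ℝ → ℝ} (hu : ∀ z ∈ E, u z = v z) : Q m E v ≤ Energy m u :=
  csInf_le ⟨0, by rintro r ⟨u, -, rfl⟩; exact energy_nonneg u⟩ ⟨u, hu, rfl⟩

/-- Only the values on the finite set `V m` enter the energy, and clamping them to an interval
containing the data on `E ∩ V m` lowers it, so it suffices to minimize over a compact product of
singletons and intervals. -/
lemma exists_energy_eq_Q (m : ℕ) (E : Set (ℝ × ℝ)) (v : ℝ × ℝ → ℝ) :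
    ∃ u : ℝ × ℝ → ℝ, (∀ z ∈ E, u z = v z) ∧ Energy m u = Q m E v := by
  obtain ⟨R, hR⟩ := (((finite_V m).inter_of_right E).image fun z => |v z|).bddAbove
  have hvR : ∀ z ∈ E, z ∈ V m → v z ∈ Set.Icc (-|R|) |R| := fun z hz hzV =>
    abs_le.mp ((hR ⟨z, ⟨hz, hzV⟩, rfl⟩).trans (le_abs_self R))
  let clamp (u : ℝ × ℝ → ℝ) (t : ℝ × ℝ) : ℝ :=
    if t ∈ E then v t else Set.projIcc (-|R|) |R| (neg_le_self (abs_nonneg R)) (u t)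
  let K : Set (ℝ × ℝ → ℝ) := Set.univ.pi fun t => if t ∈ E then {v t} else Set.Icc (-|R|) |R|
  have hclampK (u) : clamp u ∈ K := fun t _ => by
    by_cases ht : t ∈ E <;> simp only [clamp, ht, if_true, if_false]
    exacts [rfl, Subtype.prop _]
  have hK : IsCompact K := isCompact_univ_pi fun t => by
    split_ifs
    exacts [isCompact_singleton, isCompact_Icc]
  obtain ⟨p, hpK, hpmin⟩ := hK.exists_isMinOn ⟨_, hclampK 0⟩ continuous_energy.continuousOn
  have hp : ∀ z ∈ E, p z = v z := fun z hz => by simpa [K, hz] using hpK z trivial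
  refine ⟨p, hp, le_antisymm (le_csInf ⟨_, v, fun _ _ => rfl, rfl⟩ ?_) (Q_le_energy hp)⟩
  rintro _ ⟨u, hu, rfl⟩
  refine (hpmin (hclampK u)).trans (energy_le_energy fun a b hab => sq_le_sq.mpr ?_)
  have hclamp : ∀ t ∈ V m, clamp u t = Set.projIcc (-|R|) |R| (neg_le_self (abs_nonneg R)) (u t) :=
    fun t htV => by
      by_cases ht : t ∈ E
      · simp only [clamp, if_pos ht, hu t ht, Set.projIcc_of_mem _ (hvR t ht htV)]
      · simp only [clamp, if_neg ht]
  rw [hclamp a hab.left_mem, hclamp b hab.right_mem]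
  exact Set.abs_projIcc_sub_projIcc _

lemma Q_add_add_Q_sub (f g : ℝ × ℝ → ℝ) :
    Q m E (f + g) + Q m E (f - g) = 2 * Q m E f + 2 * Q m E g := by
  obtain ⟨u, hu, huQ⟩ := exists_energy_eq_Q m E f
  obtain ⟨v, hv, hvQ⟩ := exists_energy_eq_Q m E g
  obtain ⟨w, hw, hwQ⟩ := exists_energy_eq_Q m E (f + g)
  obtain ⟨w', hw', hw'Q⟩ := exists_energy_eq_Q m E (f - g)
  apply le_antisymm
  · have h₁ : Q m E (f + g) ≤ Energy m (u + v) := Q_le_energy fun z hz => by simp [hu z hz, hv z hz]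
    have h₂ : Q m E (f - g) ≤ Energy m (u - v) := Q_le_energy fun z hz => by simp [hu z hz, hv z hz]
    linarith [energy_add_add_energy_sub (m := m) u v]
  · set a : ℝ × ℝ → ℝ := (2 : ℝ)⁻¹ • (w + w')
    set b : ℝ × ℝ → ℝ := (2 : ℝ)⁻¹ • (w - w')
    have h₁ : Q m E f ≤ Energy m a := Q_le_energy fun z hz => by
      simp only [a, Pi.smul_apply, Pi.add_apply, hw z hz, hw' z hz, Pi.sub_apply, smul_eq_mul]
      ring
    have h₂ : Q m E g ≤ Energy m b := Q_le_energy fun z hz => by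
      simp only [b, Pi.smul_apply, Pi.sub_apply, hw z hz, hw' z hz, Pi.add_apply, smul_eq_mul]
      ring
    have hab : a + b = w ∧ a - b = w' := by
      constructor <;> ext t <;> simp only [a, b, Pi.add_apply, Pi.sub_apply, Pi.smul_apply,
        smul_eq_mul] <;> ring
    have hpar := energy_add_add_energy_sub (m := m) a b
    rw [hab.1, hab.2] at hpar
    linarith

lemma Q_abs_le (v : ℝ × ℝ → ℝ) : Q m E |v| ≤ Q m E v := by
  obtain ⟨u, hu, huQ⟩ := exists_energy_eq_Q m E v
  calc Q m E |v| ≤ Energy m |u| := Q_le_energy fun z hz => by simp [hu z hz]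
    _ ≤ Energy m u := energy_abs_le u
    _ = Q m E v := huQ

lemma Q_piecewise_neg_le {B : Set (ℝ × ℝ)} {v : ℝ × ℝ → ℝ}
    (hB : ∀ a b, Nbr m a b → a ∈ B → b ∉ B → b ∈ E ∧ v b = 0) :
    Q m E (B.piecewise (-v) v) ≤ Q m E v := by
  obtain ⟨u, hu, huQ⟩ := exists_energy_eq_Q m E v
  have hflip : Energy m (B.piecewise (-u) u) = Energy m u := by
    refine energy_congr fun a b hab => ?_
    have hu0 : ∀ a b, Nbr m a b → a ∈ B → b ∉ B → u b = 0 := fun a b hab ha hb => by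
      obtain ⟨hbE, hvb⟩ := hB a b hab ha hb
      rw [hu b hbE, hvb]
    by_cases ha : a ∈ B <;> by_cases hb : b ∈ B <;>
      simp only [Set.piecewise_eq_of_mem, Set.piecewise_eq_of_notMem, ha, hb, Pi.neg_apply,
        not_false_eq_true]
    · ring
    · rw [hu0 a b hab ha hb]; ring
    · rw [hu0 b a hab.symm hb ha]; ring
  calc Q m E (B.piecewise (-v) v) ≤ Energy m (B.piecewise (-u) u) :=
        Q_le_energy fun z hz => by by_cases hzB : z ∈ B <;> simp [hzB, hu z hz]
    _ = Q m E v := hflip.trans huQ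

end Q

section Minimizers

variable {m : ℕ} {E : Set (ℝ × ℝ)}

lemma mul_nonneg_of_energy_abs_eq {w : ℝ × ℝ → ℝ} (hw : Energy m |w| = Energy m w)
    {a b : ℝ × ℝ} (hab : Nbr m a b) : 0 ≤ w a * w b := by
  rw [energy_eq_sum, energy_eq_sum, mul_right_inj' (by positivity)] at hw
  have h := (Finset.sum_eq_sum_iff_of_le fun e _ => edgeVal_abs_le w e.1).mp hw
    ⟨s(a, b), a, b, hab, rfl⟩ (Finset.mem_univ _)
  simp only [edgeVal, Sym2.lift_mk, Pi.abs_apply] at h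
  nlinarith [sq_abs (w a), sq_abs (w b), abs_mul (w a) (w b), abs_nonneg (w a * w b)]

lemma energyPolar_ind_eq_zero {u v : ℝ × ℝ → ℝ} (hu : ∀ t ∈ E, u t = v t)
    (hmin : Energy m u = Q m E v) {z : ℝ × ℝ} (hz : z ∉ E) : energyPolar m u (ind z) = 0 := by
  have hquad : ∀ t : ℝ, 0 ≤ Energy m (ind z) * (t * t) + 2 * energyPolar m u (ind z) * t + 0 :=
    fun t => by
      have : Energy m u ≤ Energy m (u + t • ind z) := hmin ▸ Q_le_energy fun s hs => by
        simp [ind, ne_of_mem_of_not_mem hs hz, hu s hs]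
      rw [energy_add_smul] at this
      nlinarith
  have := discrim_le_zero hquad
  rw [discrim] at this
  nlinarith [sq_nonneg (energyPolar m u (ind z))]

/-- Minimum principle: raising the value at `z` would otherwise lower the energy. -/
lemma eq_zero_of_energy_eq_Q {u v : ℝ × ℝ → ℝ} (hu : ∀ t ∈ E, u t = v t)
    (hmin : Energy m u = Q m E v) (hnonneg : ∀ t, 0 ≤ u t) {z b : ℝ × ℝ} (hz : z ∉ E)
    (hz0 : u z = 0) (hzb : Nbr m z b) : u b = 0 := by
  have hedge : ∀ e : {e : Sym2 (ℝ × ℝ) // IsEdge m e}, edgeProd u (ind z) e ≤ 0 := by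
    rintro ⟨_, c, d, hcd, rfl⟩
    simp only [edgeProd, Sym2.lift_mk, ind]
    split_ifs with hc hd hd
    · exact absurd (hc.trans hd.symm) hcd.1
    · subst hc; nlinarith [hnonneg d]
    · subst hd; nlinarith [hnonneg c]
    · simp
  have hsum := energyPolar_ind_eq_zero hu hmin hz
  rw [energyPolar, mul_eq_zero, or_iff_right (by positivity)] at hsum
  have h := (Finset.sum_eq_zero_iff_of_nonpos fun e _ => hedge e).mp hsum
    ⟨s(z, b), z, b, hzb, rfl⟩ (Finset.mem_univ _)
  simpa [edgeProd, ind, hzb.1.symm, hz0] using h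

end Minimizers

lemma exists_lt_and_not_succ {P : ℕ → Prop} {k : ℕ} (h0 : P 0) (hk : ¬ P k) :
    ∃ i < k, P i ∧ ¬ P (i + 1) := by
  have hex : ∃ j, ¬ P j := ⟨k, hk⟩
  obtain ⟨i, hi⟩ : ∃ i, Nat.find hex = i + 1 :=
    Nat.exists_eq_add_one_of_ne_zero fun h => Nat.find_spec hex (by rwa [h])
  refine ⟨i, ?_, not_not.mp (Nat.find_min hex (by omega)), hi ▸ Nat.find_spec hex⟩
  have := Nat.find_min' hex hk
  omega

section Separation

variable {m : ℕ} {E : Set (ℝ × ℝ)} {x y : ℝ × ℝ}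

def Separates (m : ℕ) (E : Set (ℝ × ℝ)) (x y : ℝ × ℝ) : Prop :=
  ∀ (k : ℕ) (z : ℕ → ℝ × ℝ), z 0 = x → z k = y →
    (∀ i < k, Nbr m (z i) (z (i + 1))) → ∃ i, 0 < i ∧ i < k ∧ z i ∈ E

def NbrOutside (m : ℕ) (E : Set (ℝ × ℝ)) (a b : ℝ × ℝ) : Prop :=
  Nbr m a b ∧ b ∉ E

lemma exists_path_of_reflTransGen {a : ℝ × ℝ} (h : ReflTransGen (NbrOutside m E) y a) :
    ∃ (k : ℕ) (z : ℕ → ℝ × ℝ), z 0 = a ∧ z k = y ∧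
      (∀ i < k, Nbr m (z i) (z (i + 1))) ∧ ∀ i < k, z i ∉ E := by
  induction h with
  | refl => exact ⟨0, fun _ => y, rfl, rfl, by simp, by simp⟩
  | @tail b c _ hbc ih =>
    obtain ⟨k, z, hz0, hzk, hstep, hout⟩ := ih
    refine ⟨k + 1, fun | 0 => c | i + 1 => z i, rfl, hzk, ?_, ?_⟩
    · rintro (_ | i) hi
      exacts [show Nbr m c (z 0) from hz0 ▸ hbc.1.symm, hstep i (by omega)]
    · rintro (_ | i) hi
      exacts [hbc.2, hout i (by omega)]

lemma Separates.not_nbr {a : ℝ × ℝ} (hsep : Separates m E x y)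
    (ha : ReflTransGen (NbrOutside m E) y a) : ¬ Nbr m x a := fun hxa => by
  obtain ⟨k, z, hz0, hzk, hstep, hout⟩ := exists_path_of_reflTransGen ha
  obtain ⟨_ | i, hi0, hik, hiE⟩ := hsep (k + 1) (fun | 0 => x | i + 1 => z i) rfl hzk <| by
    rintro (_ | i) hi
    exacts [show Nbr m x (z 0) from hz0 ▸ hxa, hstep i (by omega)]
  exacts [lt_irrefl 0 hi0, hout i (by omega) hiE]

lemma abs_ind_sub_ind (hxy : x ≠ y) : |ind x - ind y| = ind x + ind y := by
  ext t
  by_cases htx : t = x <;> by_cases hty : t = y <;> simp_all [ind]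

lemma Q_add_le_Q_sub (hxy : x ≠ y) : Q m E (ind x + ind y) ≤ Q m E (ind x - ind y) :=
  abs_ind_sub_ind hxy ▸ Q_abs_le _

lemma Q_sub_le_Q_add_of_separates (hx : x ∈ E) (hxy : x ≠ y) (hsep : Separates m E x y) :
    Q m E (ind x - ind y) ≤ Q m E (ind x + ind y) := by
  set B := {b | ReflTransGen (NbrOutside m E) y b}
  have hyB : y ∈ B := ReflTransGen.refl
  have hxB : x ∉ B := fun hxB => by
    rcases ReflTransGen.cases_tail hxB with h | ⟨c, -, hcx⟩
    exacts [hxy h, hcx.2 hx]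
  have hflip : B.piecewise (-(ind x + ind y)) (ind x + ind y) = ind x - ind y := by
    ext t
    by_cases htB : t ∈ B
    · simp [htB, ind, ne_of_mem_of_not_mem htB hxB]
    · simp [htB, ind, (ne_of_mem_of_not_mem hyB htB).symm]
  rw [← hflip]
  refine Q_piecewise_neg_le fun a b hab ha hb => ?_
  have hbE : b ∈ E := by_contra fun hbE => hb (ha.tail ⟨hab, hbE⟩)
  have hbx : b ≠ x := by rintro rfl; exact hsep.not_nbr ha hab.symm
  have hby : b ≠ y := by rintro rfl; exact hb hyB
  exact ⟨hbE, by simp [ind, hbx, hby]⟩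

lemma Q_add_lt_Q_sub_of_not_separates (hx : x ∈ E) (hy : y ∈ E) (hxy : x ≠ y)
    (hsep : ¬ Separates m E x y) : Q m E (ind x + ind y) < Q m E (ind x - ind y) := by
  simp only [Separates, not_forall, not_exists, not_and] at hsep
  obtain ⟨k, z, hz0, hzk, hstep, hout⟩ := hsep
  refine (Q_add_le_Q_sub hxy).lt_of_ne fun hQ => ?_
  obtain ⟨w, hw, hwQ⟩ := exists_energy_eq_Q m E (ind x - ind y)
  have habs : ∀ t ∈ E, |w| t = (ind x + ind y) t := fun t ht => by
    rw [← abs_ind_sub_ind hxy, Pi.abs_apply, Pi.abs_apply, hw t ht]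
  have hE : Energy m |w| = Energy m w :=
    (energy_abs_le w).antisymm (hwQ ▸ hQ ▸ Q_le_energy habs)
  have hwx : w x = 1 := by simp [hw x hx, ind, hxy]
  have hwy : w y = -1 := by simp [hw y hy, ind, hxy.symm]
  obtain ⟨i, hik, hpos, hnonpos⟩ := exists_lt_and_not_succ (P := fun i => 0 < w (z i)) (k := k)
    (by simp [hz0, hwx]) (by simp [hzk, hwy])
  have hzero : w (z (i + 1)) = 0 := le_antisymm (not_lt.mp hnonpos)
    (nonneg_of_mul_nonneg_right (mul_nonneg_of_energy_abs_eq hE (hstep i hik)) hpos)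
  have hi_succ : i + 1 < k := by
    refine lt_of_le_of_ne hik fun h => ?_
    rw [h, hzk, hwy] at hzero
    norm_num at hzero
  have hwi : |w| (z i) = 0 := eq_zero_of_energy_eq_Q habs (by rw [hE, hwQ, hQ])
    (fun t => abs_nonneg (w t)) (hout (i + 1) (Nat.succ_pos i) hi_succ) (by simp [hzero])
    (hstep i hik).symm
  simp only [Pi.abs_apply, abs_eq_zero] at hwi
  exact hpos.ne' hwi

end Separation

lemma cond_eq (m : ℕ) (E : Set (ℝ × ℝ)) (x y : ℝ × ℝ) :
    cond m E x y = (Q m E (ind x - ind y) - Q m E (ind x + ind y)) / 4 := by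
  rw [cond]
  linarith [Q_add_add_Q_sub (m := m) (E := E) (ind x) (ind y)]

theorem stmt3_general (m : ℕ) (Γ' : Set (ℝ × ℝ))
    (x y : ℝ × ℝ) (hx : x ∈ Γ') (hy : y ∈ Γ') (hxy : x ≠ y) :
    cond m Γ' x y = 0 ↔
      ∀ (k : ℕ) (z : ℕ → ℝ × ℝ), z 0 = x → z k = y →
        (∀ i < k, Nbr m (z i) (z (i + 1))) →
        ∃ i, 0 < i ∧ i < k ∧ z i ∈ Γ' := by
  change cond m Γ' x y = 0 ↔ Separates m Γ' x y
  rw [cond_eq]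
  constructor
  · intro hcond
    by_contra hsep
    linarith [Q_add_lt_Q_sub_of_not_separates hx hy hxy hsep]
  · intro hsep
    linarith [Q_sub_le_Q_add_of_separates hx hxy hsep, Q_add_le_Q_sub (m := m) (E := Γ') hxy]

/-- For `Γ' ⊆ V_m` and distinct `x, y ∈ Γ'`, the conductance
`c^{Γ'}_{x,y}` vanishes iff every path from `x` to `y` in the graph `Γ_m` contains an
interior vertex lying in `Γ'`. -/
theorem stmt3 (m : ℕ) (Γ' : Set (ℝ × ℝ)) (hΓ : Γ' ⊆ V m)
    (x y : ℝ × ℝ) (hx : x ∈ Γ') (hy : y ∈ Γ') (hxy : x ≠ y) :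
    cond m Γ' x y = 0 ↔
      ∀ (k : ℕ) (z : ℕ → ℝ × ℝ), z 0 = x → z k = y →
        (∀ i < k, Nbr m (z i) (z (i + 1))) →
        ∃ i, 0 < i ∧ i < k ∧ z i ∈ Γ' :=
  stmt3_general m Γ' x y hx hy hxy

end SGPaper
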